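/- arXiv:2605.14299 — 3 statements merged into one kernel-verified Lean document; each statement's English description precedes it below -/
import Mathlib

section
/- Let Δ = [[0,1],[−1,0]] and Δ_n the n-fold direct sum of Δ. If a real symmetric 2n×2n matrix ν satisfies ν + iΔ_n ≥ 0 (as a complex Hermitian matrix), then ν is positive definite. -/
/-!
For real `x`, `x* (ν + iΔ) x = xᵀνx + i xᵀΔx`, so positivity of `ν + iΔ` gives `xᵀνx ≥ 0`.
If `xᵀνx = 0`, then `x` is an isotropic vector of the positive semidefinite matrix `ν + iΔ`,
hence lies in its kernel; the imaginary part of `(ν + iΔ) x = 0` is `Δx = 0`, and `Δ² = -1`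
forces `x = 0`.
-/

open Matrix ComplexOrder

/-- `Δ_n = Δ ⊕ ⋯ ⊕ Δ` with `Δ = [[0,1],[−1,0]]` (0-based indexing):
entry `(i, i+1) = 1` for even `i`, entry `(i+1, i) = −1` for even `i`, zeros elsewhere. -/
def DeltaN (n : ℕ) : Matrix (Fin (2*n)) (Fin (2*n)) ℝ :=
  fun i j =>
    if (i:ℕ) % 2 = 0 ∧ (j:ℕ) = (i:ℕ) + 1 then 1
    else if (j:ℕ) % 2 = 0 ∧ (i:ℕ) = (j:ℕ) + 1 then -1
    else 0

section
variable {ι : Type*} [Fintype ι] {A S : Matrix ι ι ℝ}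

lemma map_ofReal_mulVec (x : ι → ℝ) :
    A.map ((↑) : ℝ → ℂ) *ᵥ ((↑) ∘ x) = (↑) ∘ (A *ᵥ x) :=
  funext fun i => (RingHom.map_mulVec Complex.ofRealHom A x i).symm

lemma mulVec_map_ofReal_add_I_smul (x : ι → ℝ) :
    (A.map ((↑) : ℝ → ℂ) + Complex.I • S.map ((↑) : ℝ → ℂ)) *ᵥ ((↑) ∘ x) =
      (↑) ∘ (A *ᵥ x) + Complex.I • (↑) ∘ (S *ᵥ x) := by
  rw [add_mulVec, smul_mulVec, map_ofReal_mulVec, map_ofReal_mulVec]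

lemma dotProduct_mulVec_map_ofReal_add_I_smul (x : ι → ℝ) :
    star ((↑) ∘ x) ⬝ᵥ (A.map ((↑) : ℝ → ℂ) + Complex.I • S.map ((↑) : ℝ → ℂ)) *ᵥ ((↑) ∘ x) =
      ↑(x ⬝ᵥ A *ᵥ x) + Complex.I * ↑(x ⬝ᵥ S *ᵥ x) := by
  rw [mulVec_map_ofReal_add_I_smul, dotProduct_add, dotProduct_smul, smul_eq_mul]
  simp [dotProduct]

variable (h : (A.map ((↑) : ℝ → ℂ) + Complex.I • S.map ((↑) : ℝ → ℂ)).PosSemidef)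
include h

omit [Fintype ι] in
lemma isSymm_of_posSemidef_map_add_I_smul : A.IsSymm := by
  ext i j
  simpa using congrArg Complex.re (h.1.apply i j)

lemma dotProduct_mulVec_nonneg_and_eq_zero_of_posSemidef_map_add_I_smul (x : ι → ℝ) :
    0 ≤ x ⬝ᵥ A *ᵥ x ∧ x ⬝ᵥ S *ᵥ x = 0 := by
  have hx := h.dotProduct_mulVec_nonneg ((↑) ∘ x)
  rw [dotProduct_mulVec_map_ofReal_add_I_smul, Complex.nonneg_iff] at hx
  simpa [eq_comm] using hx

lemma mulVec_eq_zero_of_posSemidef_map_add_I_smul {x : ι → ℝ} (hx : x ⬝ᵥ A *ᵥ x = 0) :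
    S *ᵥ x = 0 := by
  have hSx := (dotProduct_mulVec_nonneg_and_eq_zero_of_posSemidef_map_add_I_smul h x).2
  have hker := (h.dotProduct_mulVec_zero_iff ((↑) ∘ x)).1 (by
    rw [dotProduct_mulVec_map_ofReal_add_I_smul, hx, hSx]; simp)
  rw [mulVec_map_ofReal_add_I_smul] at hker
  ext i
  simpa using congrArg Complex.im (congrFun hker i)

lemma posDef_of_posSemidef_map_add_I_smul (hS : ∀ x, S *ᵥ x = 0 → x = 0) : A.PosDef := by
  rw [posDef_iff_dotProduct_mulVec]
  refine ⟨isSymm_of_posSemidef_map_add_I_smul h, fun x hx => ?_⟩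
  refine (dotProduct_mulVec_nonneg_and_eq_zero_of_posSemidef_map_add_I_smul h x).1.lt_of_ne' ?_
  exact fun hx0 => hx (hS x (mulVec_eq_zero_of_posSemidef_map_add_I_smul h hx0))

end

lemma deltaN_mulVec_apply {n : ℕ} (x : Fin (2*n) → ℝ) (i : Fin (2*n)) :
    (DeltaN n *ᵥ x) i =
      if h : (i:ℕ) % 2 = 0 then x ⟨i + 1, by omega⟩ else -x ⟨i - 1, by omega⟩ := by
  rw [mulVec, dotProduct]
  split_ifs with hi
  · rw [Finset.sum_eq_single ⟨i + 1, by omega⟩ (fun k _ hk => ?_) (by simp)]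
    · simp [DeltaN, hi]
    · have : (k : ℕ) ≠ i + 1 := fun e => hk (Fin.ext e)
      simp only [DeltaN]
      split_ifs <;> first | omega | simp
  · rw [Finset.sum_eq_single ⟨i - 1, by omega⟩ (fun k _ hk => ?_) (by simp)]
    · simp only [DeltaN]
      split_ifs <;> first | omega | simp
    · have : (k : ℕ) ≠ i - 1 := fun e => hk (Fin.ext e)
      simp only [DeltaN]
      split_ifs <;> first | omega | simp

lemma deltaN_mulVec_deltaN_mulVec {n : ℕ} (x : Fin (2*n) → ℝ) :
    DeltaN n *ᵥ DeltaN n *ᵥ x = -x := by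
  ext i
  rw [deltaN_mulVec_apply, Pi.neg_apply]
  split_ifs with hi
  · rw [deltaN_mulVec_apply, dif_neg (by simp; omega)]
    rfl
  · rw [deltaN_mulVec_apply, dif_pos (by simp; omega)]
    congr 2; ext; simp; omega

lemma eq_zero_of_deltaN_mulVec_eq_zero {n : ℕ} (x : Fin (2*n) → ℝ) (hx : DeltaN n *ᵥ x = 0) :
    x = 0 := by
  simpa [hx] using (deltaN_mulVec_deltaN_mulVec x).symm

theorem posDef_of_uncertainty_general (n : ℕ) (ν : Matrix (Fin (2*n)) (Fin (2*n)) ℝ)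
    (h : (ν.map (fun x : ℝ => (x : ℂ)) +
          Complex.I • (DeltaN n).map (fun x : ℝ => (x : ℂ))).PosSemidef) :
    ν.PosDef :=
  posDef_of_posSemidef_map_add_I_smul h eq_zero_of_deltaN_mulVec_eq_zero

/-- If a real symmetric `2n×2n` matrix `ν` satisfies `ν + iΔ_n ≥ 0` (as a complex
Hermitian matrix), then `ν` is positive definite. -/
theorem posDef_of_uncertainty (n : ℕ) (ν : Matrix (Fin (2*n)) (Fin (2*n)) ℝ)
    (hsymm : ν.IsSymm)
    (h : (ν.map (fun x : ℝ => (x : ℂ)) +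
          Complex.I • (DeltaN n).map (fun x : ℝ => (x : ℂ))).PosSemidef) :
    ν.PosDef :=
  posDef_of_uncertainty_general n ν h
end

section
/- Define 𝓘_c(T,N,d) := ‖T21‖_Tr + ‖T12‖_Tr·‖T22‖_Tr + ‖N12‖_Tr + ‖d_e‖_1 with blocks as above. Suppose A = diag(A11, A22) and O = diag(O11, O22) (in the odd/even block decomposition) with ‖A11‖, ‖A22‖, ‖O11‖, ‖O22‖ ≤ 1 in operator norm and ‖A22‖_{1→1} ≤ 1 as an ℓ¹-operator, Y = diag(Y11, Y22), and d̄_e = 0. Let T' = A T O^T (blockwise this yields T'_{ij} = A_{ii} T_{ij} O_{jj}^T), N' = A N A^T + Y, d'_e = A22 d_e. Then 𝓘_c(T',N',d') ≤ 𝓘_c(T,N,d). -/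
open Matrix

/-- The trace norm (Schatten 1-norm) of a real matrix. -/
noncomputable def traceNorm {m n : Type*} [Fintype m] [Fintype n] [DecidableEq n]
    (A : Matrix m n ℝ) : ℝ :=
  ((Matrix.posSemidef_conjTranspose_mul_self A).1.eigenvectorUnitary.1 *
    Matrix.diagonal (((↑) : ℝ → ℝ) ∘ (√·) ∘ (Matrix.posSemidef_conjTranspose_mul_self A).1.eigenvalues) *
    (star (Matrix.posSemidef_conjTranspose_mul_self A).1.eigenvectorUnitary : Matrix n n ℝ)).trace

/-- The operator (spectral) norm of a real matrix. -/
noncomputable def opNorm {m n : Type*} [Fintype m] [Fintype n] [DecidableEq n]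
    (A : Matrix m n ℝ) : ℝ :=
  ‖LinearMap.toContinuousLinearMap (Matrix.toEuclideanLin A)‖

/-- The ℓ¹ norm on ℝ^n. -/
def l1Norm {n : Type*} [Fintype n] (d : n → ℝ) : ℝ := ∑ i, |d i|

/-- The induced ℓ¹→ℓ¹ operator norm: the maximum absolute column sum. -/
noncomputable def l1OpNorm {m n : Type*} [Fintype m] (A : Matrix m n ℝ) : ℝ :=
  ⨆ j, ∑ i, |A i j|

/-- `𝓘_c(T,N,d) = ‖T21‖_Tr + ‖T12‖_Tr·‖T22‖_Tr + ‖N12‖_Tr + ‖d_e‖₁`, where the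
blocks are taken in the odd/even splitting `ℝ^{2n} = ℝ^n ⊕ ℝ^n` and `d_e` is the
even part of `d`. -/
noncomputable def Ic (n : ℕ) (T N : Matrix (Fin n ⊕ Fin n) (Fin n ⊕ Fin n) ℝ)
    (d : Fin n ⊕ Fin n → ℝ) : ℝ :=
  traceNorm T.toBlocks₂₁ + traceNorm T.toBlocks₁₂ * traceNorm T.toBlocks₂₂ +
    traceNorm N.toBlocks₁₂ + l1Norm (fun i => d (Sum.inr i))

/-!
Every summand of `𝓘_c` is non-increasing on its own. The block-diagonal maps act on the
blocks as `X ↦ Aᵢᵢ X Oⱼⱼᵀ`, and the trace norm satisfies `‖A X B‖_Tr ≤ ‖A‖ ‖X‖_Tr ‖B‖` by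
duality: `tr (C M) ≤ ‖C‖ ‖M‖_Tr` (read off a singular value decomposition of `M`), with
equality for a contraction `C` built from the polar decomposition. The even displacement is
mapped to `A₂₂ dₑ`, which is controlled by the ℓ¹ operator norm, while `Y` and `d̄` do not
touch the blocks that enter `𝓘_c`.
-/

open scoped Matrix.Norms.L2Operator

variable {l m n o p q : Type*}

theorem norm_toLp_col_of_transpose_mul_self_eq_diagonal [Fintype m] [DecidableEq n]
    {P : Matrix m n ℝ} {d : n → ℝ} (h : Pᵀ * P = diagonal d) (j : n) :
    ‖WithLp.toLp 2 (Pᵀ j)‖ = √(d j) := by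
  have hj := congrFun (congrFun h j) j
  simp only [mul_apply, transpose_apply, diagonal_apply_eq] at hj
  simp [EuclideanSpace.norm_eq, hj, sq]

theorem dotProduct_mulVec_le_l2_opNorm [Fintype m] [Fintype n] [DecidableEq n]
    (C : Matrix m n ℝ) (v : m → ℝ) (w : n → ℝ) :
    v ⬝ᵥ (C *ᵥ w) ≤ ‖WithLp.toLp 2 v‖ * (‖C‖ * ‖WithLp.toLp 2 w‖) :=
  calc v ⬝ᵥ (C *ᵥ w) = inner ℝ (WithLp.toLp 2 v) (WithLp.toLp 2 (C *ᵥ w)) := by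
        simp [EuclideanSpace.inner_eq_star_dotProduct, dotProduct_comm]
    _ ≤ ‖WithLp.toLp 2 v‖ * ‖WithLp.toLp 2 (C *ᵥ w)‖ := real_inner_le_norm _ _
    _ ≤ _ := by gcongr; exact C.l2_opNorm_mulVec (WithLp.toLp 2 w)

theorem l2_opNorm_le_one_of_transpose_mul_self_eq_diagonal [Fintype m] [Fintype n]
    [DecidableEq n] {P : Matrix m n ℝ} {d : n → ℝ} (h : Pᵀ * P = diagonal d)
    (hd : ∀ j, |d j| ≤ 1) : ‖P‖ ≤ 1 := by
  have hPP : ‖P‖ * ‖P‖ ≤ 1 := by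
    rw [← l2_opNorm_conjTranspose_mul_self, conjTranspose_eq_transpose_of_trivial, h,
      l2_opNorm_diagonal]
    exact (pi_norm_le_iff_of_nonneg zero_le_one).2 hd
  nlinarith [norm_nonneg P]

theorem exists_traceNorm_decomposition [Fintype m] [Fintype n] [DecidableEq n]
    (M : Matrix m n ℝ) :
    ∃ (U : Matrix n n ℝ) (X : Matrix m n ℝ) (s : n → ℝ), Uᵀ * U = 1 ∧ M = X * Uᵀ ∧
      Xᵀ * X = diagonal (s ^ 2) ∧ (∀ j, 0 ≤ s j) ∧ traceNorm M = ∑ j, s j := by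
  set hM := posSemidef_conjTranspose_mul_self M
  set U : Matrix n n ℝ := (hM.1.eigenvectorUnitary : Matrix n n ℝ)
  have hUU : Uᵀ * U = 1 := Matrix.mem_unitaryGroup_iff'.mp hM.1.eigenvectorUnitary.2
  have hUU' : U * Uᵀ = 1 := Matrix.mem_unitaryGroup_iff.mp hM.1.eigenvectorUnitary.2
  refine ⟨U, M * U, fun j => √(hM.1.eigenvalues j), hUU, ?_, ?_, fun j => Real.sqrt_nonneg _, ?_⟩
  · rw [Matrix.mul_assoc, hUU', Matrix.mul_one]
  · have h := hM.1.conjStarAlgAut_star_eigenvectorUnitary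
    rw [Unitary.conjStarAlgAut_star_apply] at h
    have : (fun j => √(hM.1.eigenvalues j)) ^ 2 = hM.1.eigenvalues := by
      funext j; exact Real.sq_sqrt (hM.eigenvalues_nonneg j)
    rw [this, transpose_mul, ← conjTranspose_eq_transpose_of_trivial]
    simpa [Matrix.mul_assoc, star_eq_conjTranspose, U] using h
  · unfold traceNorm
    rw [trace_mul_comm, ← Matrix.mul_assoc]
    simp

theorem trace_mul_le_l2_opNorm_mul_traceNorm [Fintype m] [Fintype n] [DecidableEq m]
    [DecidableEq n] (C : Matrix n m ℝ) (M : Matrix m n ℝ) :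
    trace (C * M) ≤ ‖C‖ * traceNorm M := by
  obtain ⟨U, X, s, hU, rfl, hX, hs, hnorm⟩ := exists_traceNorm_decomposition M
  have hU' : Uᵀ * U = diagonal fun _ => 1 := hU.trans diagonal_one.symm
  calc trace (C * (X * Uᵀ)) = ∑ j, Uᵀ j ⬝ᵥ (C *ᵥ Xᵀ j) := by
        rw [← Matrix.mul_assoc, trace_mul_comm]
        simp [trace, mul_apply, mulVec, dotProduct, Finset.mul_sum]
    _ ≤ ∑ j, ‖C‖ * s j := Finset.sum_le_sum fun j _ => by
        simpa [norm_toLp_col_of_transpose_mul_self_eq_diagonal hU',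
          norm_toLp_col_of_transpose_mul_self_eq_diagonal hX, Real.sqrt_sq (hs j)]
          using dotProduct_mulVec_le_l2_opNorm C (Uᵀ j) (Xᵀ j)
    _ = ‖C‖ * traceNorm (X * Uᵀ) := by rw [hnorm, Finset.mul_sum]

theorem exists_l2_opNorm_le_one_trace_mul_eq_traceNorm [Fintype m] [Fintype n] [DecidableEq m]
    [DecidableEq n] (M : Matrix m n ℝ) :
    ∃ W : Matrix n m ℝ, ‖W‖ ≤ 1 ∧ trace (W * M) = traceNorm M := by
  obtain ⟨U, X, s, hU, rfl, hX, -, hnorm⟩ := exists_traceNorm_decomposition M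
  have hY : (X * diagonal s⁻¹)ᵀ * (X * diagonal s⁻¹) =
      diagonal fun j => (s j)⁻¹ * (s j ^ 2 * (s j)⁻¹) := by
    rw [transpose_mul, diagonal_transpose, Matrix.mul_assoc, ← Matrix.mul_assoc Xᵀ, hX,
      diagonal_mul_diagonal, diagonal_mul_diagonal]
    rfl
  -- the transposed polar factor; the junk value `0⁻¹ = 0` kills the kernel directions of `M`
  refine ⟨U * (X * diagonal s⁻¹)ᵀ, ?_, ?_⟩
  · have hUn : ‖U‖ ≤ 1 := l2_opNorm_le_one_of_transpose_mul_self_eq_diagonal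
      (hU.trans diagonal_one.symm) fun _ => by simp
    have hYn : ‖X * diagonal s⁻¹‖ ≤ 1 := by
      refine l2_opNorm_le_one_of_transpose_mul_self_eq_diagonal hY fun j => ?_
      rcases eq_or_ne (s j) 0 with h | h
      · simp [h]
      · rw [show (s j)⁻¹ * (s j ^ 2 * (s j)⁻¹) = 1 by field_simp, abs_one]
    calc ‖U * (X * diagonal s⁻¹)ᵀ‖ ≤ ‖U‖ * ‖(X * diagonal s⁻¹)ᵀ‖ := l2_opNorm_mul _ _
      _ ≤ 1 * 1 := by
        rw [← conjTranspose_eq_transpose_of_trivial, l2_opNorm_conjTranspose]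
        gcongr
      _ = 1 := one_mul 1
  · rw [hnorm, Matrix.mul_assoc, trace_mul_comm]
    simp only [Matrix.mul_assoc, hU, Matrix.mul_one]
    rw [transpose_mul, diagonal_transpose, Matrix.mul_assoc, hX, diagonal_mul_diagonal,
      trace_diagonal]
    refine Finset.sum_congr rfl fun j _ => ?_
    rcases eq_or_ne (s j) 0 with h | h
    · simp [h]
    · rw [Pi.inv_apply, Pi.pow_apply, sq, inv_mul_cancel_left₀ h]

theorem traceNorm_nonneg [Fintype m] [Fintype n] [DecidableEq n] (M : Matrix m n ℝ) :
    0 ≤ traceNorm M := by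
  obtain ⟨-, -, s, -, -, -, hs, hnorm⟩ := exists_traceNorm_decomposition M
  exact hnorm ▸ Finset.sum_nonneg fun j _ => hs j

theorem traceNorm_mul_mul_le [Fintype l] [Fintype m] [Fintype n] [Fintype o] [DecidableEq l]
    [DecidableEq m] [DecidableEq n] [DecidableEq o]
    (A : Matrix l m ℝ) (M : Matrix m n ℝ) (B : Matrix n o ℝ) :
    traceNorm (A * M * B) ≤ ‖A‖ * traceNorm M * ‖B‖ := by
  obtain ⟨W, hW, hWtrace⟩ := exists_l2_opNorm_le_one_trace_mul_eq_traceNorm (A * M * B)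
  calc traceNorm (A * M * B) = trace ((B * W * A) * M) := by
        rw [← hWtrace, ← Matrix.mul_assoc, trace_mul_comm]; simp only [Matrix.mul_assoc]
    _ ≤ ‖B * W * A‖ * traceNorm M := trace_mul_le_l2_opNorm_mul_traceNorm _ _
    _ ≤ ‖B‖ * 1 * ‖A‖ * traceNorm M := by
        have hBWA : ‖B * W * A‖ ≤ ‖B‖ * 1 * ‖A‖ :=
          calc ‖B * W * A‖ ≤ ‖B * W‖ * ‖A‖ := l2_opNorm_mul _ _
            _ ≤ ‖B‖ * ‖W‖ * ‖A‖ := by gcongr; exact l2_opNorm_mul _ _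
            _ ≤ ‖B‖ * 1 * ‖A‖ := by gcongr
        exact mul_le_mul_of_nonneg_right hBWA (traceNorm_nonneg M)
    _ = ‖A‖ * traceNorm M * ‖B‖ := by ring

theorem traceNorm_mul_mul_transpose_le [Fintype l] [Fintype m] [Fintype n] [Fintype o]
    [DecidableEq l] [DecidableEq m] [DecidableEq n] [DecidableEq o]
    {A : Matrix l m ℝ} {B : Matrix o n ℝ} (hA : opNorm A ≤ 1) (hB : opNorm B ≤ 1)
    (M : Matrix m n ℝ) : traceNorm (A * M * Bᵀ) ≤ traceNorm M := by
  have hBt : ‖Bᵀ‖ ≤ 1 := by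
    rwa [← conjTranspose_eq_transpose_of_trivial, l2_opNorm_conjTranspose]
  calc traceNorm (A * M * Bᵀ) ≤ ‖A‖ * traceNorm M * ‖Bᵀ‖ := traceNorm_mul_mul_le A M Bᵀ
    _ ≤ 1 * traceNorm M * 1 := by have hM := traceNorm_nonneg M; gcongr; exact hA
    _ = traceNorm M := by ring

theorem l1Norm_mulVec_le [Fintype m] [Fintype n] (A : Matrix m n ℝ) (v : n → ℝ) :
    l1Norm (A *ᵥ v) ≤ l1OpNorm A * l1Norm v :=
  calc ∑ i, |∑ j, A i j * v j| ≤ ∑ i, ∑ j, |A i j| * |v j| :=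
        Finset.sum_le_sum fun i _ => (Finset.abs_sum_le_sum_abs _ _).trans_eq (by simp [abs_mul])
    _ = ∑ j, (∑ i, |A i j|) * |v j| := by rw [Finset.sum_comm]; simp [Finset.sum_mul]
    _ ≤ ∑ j, l1OpNorm A * |v j| := Finset.sum_le_sum fun j _ =>
        mul_le_mul_of_nonneg_right
          (le_ciSup (f := fun j => ∑ i, |A i j|) (Set.finite_range _).bddAbove j) (abs_nonneg _)
    _ = l1OpNorm A * l1Norm v := (Finset.mul_sum ..).symm

theorem fromBlocks_diag_mul_mul_fromBlocks_diag {α : Type*} [Semiring α]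
    [Fintype m] [Fintype n] [Fintype o] [Fintype p]
    (A₁ : Matrix l m α) (A₂ : Matrix q n α) (T : Matrix (m ⊕ n) (o ⊕ p) α)
    (B₁ : Matrix o l α) (B₂ : Matrix p q α) :
    fromBlocks A₁ 0 0 A₂ * T * fromBlocks B₁ 0 0 B₂ =
      fromBlocks (A₁ * T.toBlocks₁₁ * B₁) (A₁ * T.toBlocks₁₂ * B₂)
        (A₂ * T.toBlocks₂₁ * B₁) (A₂ * T.toBlocks₂₂ * B₂) := by
  conv_lhs => rw [← fromBlocks_toBlocks T]
  simp only [fromBlocks_multiply, Matrix.zero_mul, Matrix.mul_zero, add_zero, zero_add]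

/-- Monotonicity of the continuous imaginarity measure `𝓘_c` under the free
superchannels of covariant-real form: `A = diag(A11,A22)`, `O = diag(O11,O22)`
with all operator norms `≤ 1` and `‖A22‖_{1→1} ≤ 1`, `Y = diag(Y11,Y22)`, and
displacement `d̄` with zero even part.  Then
`𝓘_c(A T Oᵀ, A N Aᵀ + Y, A d + d̄) ≤ 𝓘_c(T, N, d)`. -/
theorem Ic_monotone (n : ℕ)
    (A11 A22 O11 O22 Y11 Y22 : Matrix (Fin n) (Fin n) ℝ)
    (hA11 : opNorm A11 ≤ 1) (hA22 : opNorm A22 ≤ 1)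
    (hO11 : opNorm O11 ≤ 1) (hO22 : opNorm O22 ≤ 1)
    (hA22' : l1OpNorm A22 ≤ 1)
    (T N : Matrix (Fin n ⊕ Fin n) (Fin n ⊕ Fin n) ℝ)
    (d dbar : Fin n ⊕ Fin n → ℝ) (hdbar : ∀ i : Fin n, dbar (Sum.inr i) = 0) :
    Ic n (Matrix.fromBlocks A11 0 0 A22 * T * (Matrix.fromBlocks O11 0 0 O22)ᵀ)
      (Matrix.fromBlocks A11 0 0 A22 * N * (Matrix.fromBlocks A11 0 0 A22)ᵀ +
        Matrix.fromBlocks Y11 0 0 Y22)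
      (Matrix.fromBlocks A11 0 0 A22 *ᵥ d + dbar) ≤ Ic n T N d := by
  have hd : (fun i => (fromBlocks A11 0 0 A22 *ᵥ d + dbar) (Sum.inr i)) =
      A22 *ᵥ fun i => d (Sum.inr i) := by
    funext i
    simp [fromBlocks_mulVec, hdbar i, Function.comp_def]
  unfold Ic
  simp only [fromBlocks_transpose, transpose_zero, fromBlocks_diag_mul_mul_fromBlocks_diag,
    fromBlocks_add, toBlocks_fromBlocks₂₁, toBlocks_fromBlocks₁₂, toBlocks_fromBlocks₂₂,
    add_zero, hd]
  have hT₁₂ := traceNorm_nonneg T.toBlocks₁₂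
  have hT₂₂' := traceNorm_nonneg (A22 * T.toBlocks₂₂ * O22ᵀ)
  gcongr ?_ + ?_ * ?_ + ?_ + ?_
  · exact traceNorm_mul_mul_transpose_le hA22 hO11 _
  · exact traceNorm_mul_mul_transpose_le hA11 hO22 _
  · exact traceNorm_mul_mul_transpose_le hA22 hO22 _
  · exact traceNorm_mul_mul_transpose_le hA11 hA22 _
  · exact (l1Norm_mulVec_le _ _).trans
      (mul_le_of_le_one_left (Finset.sum_nonneg fun _ _ => abs_nonneg _) hA22')
end

section
/- With blocks as above, suppose A = [[A11, A12],[0,0]] (i.e., A21 = A22 = 0 in the odd/even decomposition), Y = diag(Y11, Y22), and d̄ has zero even part. Then for any 2n×2n real matrices T, N and any d ∈ ℝ^{2n}, the transformed data T' = A T Σ' O^T Σ' (for any block-structure O), N' = A N A^T + Y, d' = A d + d̄ satisfy: the even part of d' is zero, the (odd,even) block of N' is zero, and the bottom block row of T' is zero; i.e., (T',N',d') satisfies the real-Gaussian-channel conditions with the 'completely real' T-structure. -/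
open Matrix

/-- `Σ' = diag(I_n, −I_n)` in the odd/even block decomposition. -/
def SigmaBlk (n : ℕ) : Matrix (Fin n ⊕ Fin n) (Fin n ⊕ Fin n) ℝ :=
  Matrix.fromBlocks 1 0 0 (-1)

lemma bot_row_zero {n : ℕ} (A11 A12 : Matrix (Fin n) (Fin n) ℝ)
    (M : Matrix (Fin n ⊕ Fin n) (Fin n ⊕ Fin n) ℝ) (i : Fin n) (j : Fin n ⊕ Fin n) :
    (Matrix.fromBlocks A11 A12 (0 : Matrix (Fin n) (Fin n) ℝ) 0 * M) (Sum.inr i) j = 0 := by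
  simp [Matrix.mul_apply, Matrix.fromBlocks]

/-- The 'if' direction of the imaginarity-breaking structure theorem: if
`A = [[A11,A12],[0,0]]`, `Y = diag(Y11,Y22)` and `d̄` has zero even part, then
for every channel triple `(T,N,d)` the transformed data
`T' = A T Σ' Oᵀ Σ'`, `N' = A N Aᵀ + Y`, `d' = A d + d̄` satisfy the real
Gaussian channel conditions with the 'completely real' `T`-structure: the even
part of `d'` vanishes, the (odd,even) block of `N'` vanishes, and the bottom
block row of `T'` vanishes. -/
theorem imaginarity_breaking_if (n : ℕ)
    (A11 A12 Y11 Y22 : Matrix (Fin n) (Fin n) ℝ)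
    (A Y : Matrix (Fin n ⊕ Fin n) (Fin n ⊕ Fin n) ℝ)
    (hA : A = Matrix.fromBlocks A11 A12 0 0)
    (hY : Y = Matrix.fromBlocks Y11 0 0 Y22)
    (dbar : Fin n ⊕ Fin n → ℝ) (hdbar : ∀ i : Fin n, dbar (Sum.inr i) = 0)
    (O T N : Matrix (Fin n ⊕ Fin n) (Fin n ⊕ Fin n) ℝ)
    (d : Fin n ⊕ Fin n → ℝ) :
    (∀ i : Fin n, (A *ᵥ d + dbar) (Sum.inr i) = 0) ∧
    (A * N * Aᵀ + Y).toBlocks₁₂ = 0 ∧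
    (A * T * SigmaBlk n * Oᵀ * SigmaBlk n).toBlocks₂₁ = 0 ∧
    (A * T * SigmaBlk n * Oᵀ * SigmaBlk n).toBlocks₂₂ = 0 := by
  subst hA hY
  refine ⟨?_, ?_, ?_, ?_⟩
  · intro i
    simp [Matrix.mulVec, dotProduct, Matrix.fromBlocks, hdbar i]
  · ext i j
    have : (Matrix.fromBlocks A11 A12 (0 : Matrix (Fin n) (Fin n) ℝ) 0 * N * (Matrix.fromBlocks A11 A12 (0 : Matrix (Fin n) (Fin n) ℝ) 0)ᵀ) (Sum.inl i) (Sum.inr j) = 0 := by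
      simp [Matrix.mul_apply, Matrix.fromBlocks, Finset.mul_sum, mul_comm]
    simp [Matrix.toBlocks₁₂, this]
  · ext i j
    simp [Matrix.toBlocks₂₁, Matrix.mul_assoc,
      bot_row_zero A11 A12 (T * (SigmaBlk n * (Oᵀ * SigmaBlk n))) i (Sum.inl j)]
  · ext i j
    simp [Matrix.toBlocks₂₂, Matrix.mul_assoc,
      bot_row_zero A11 A12 (T * (SigmaBlk n * (Oᵀ * SigmaBlk n))) i (Sum.inr j)]
end
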